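/- arXiv:2605.12522 — 6 statements merged into one kernel-verified Lean document; each statement's English description precedes it below -/
import Mathlib

section
/- Let q : {1,…,n} → [0,1] be a probability vector (q_c ≥ 0 for all c and Σ_{c=1}^n q_c = 1) that is nonincreasing (q_1 ≥ q_2 ≥ … ≥ q_n), and let w : {1,…,n} → [0,∞) be a nonincreasing sequence of nonnegative weights (w_1 ≥ w_2 ≥ … ≥ w_n ≥ 0) with Z := Σ_{c=1}^n q_c w_c > 0. Define the reweighted probability vector p by p_c = q_c w_c / Z. Then for every k ∈ {1,…,n}, Σ_{c=1}^k p_c ≥ Σ_{c=1}^k q_c. -/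
/-- Reweighting a nonincreasing probability vector by nonincreasing
nonnegative weights majorizes the original vector.
Indices `0, …, n-1` correspond to `1, …, n`. -/
theorem reweighted_majorizes
    (n : ℕ) (q w : ℕ → ℝ)
    (hq_nonneg : ∀ c, c < n → 0 ≤ q c)
    (hq_le_one : ∀ c, c < n → q c ≤ 1)
    (hq_sum : ∑ c ∈ Finset.range n, q c = 1)
    (hq_mono : ∀ c d, c ≤ d → d < n → q d ≤ q c)
    (hw_nonneg : ∀ c, c < n → 0 ≤ w c)
    (hw_mono : ∀ c d, c ≤ d → d < n → w d ≤ w c)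
    (Z : ℝ) (hZ : Z = ∑ c ∈ Finset.range n, q c * w c) (hZ_pos : 0 < Z)
    (p : ℕ → ℝ) (hp : ∀ c, c < n → p c = q c * w c / Z) :
    ∀ k, 1 ≤ k → k ≤ n →
      ∑ c ∈ Finset.range k, q c ≤ ∑ c ∈ Finset.range k, p c := by
  intro k hk1 hkn
  have hkn' : k - 1 < n := by omega
  set t := w (k - 1) with ht
  set A := ∑ c ∈ Finset.range k, q c with hA
  set B := ∑ c ∈ Finset.Ico k n, q c with hB
  set S1 := ∑ c ∈ Finset.range k, q c * w c with hS1
  set S2 := ∑ c ∈ Finset.Ico k n, q c * w c with hS2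
  have hsplit : ∀ f : ℕ → ℝ, ∑ c ∈ Finset.range n, f c
      = ∑ c ∈ Finset.range k, f c + ∑ c ∈ Finset.Ico k n, f c := by
    intro f
    exact (Finset.sum_range_add_sum_Ico f hkn).symm
  have hAB : A + B = 1 := by rw [hA, hB, ← hsplit, hq_sum]
  have hZsplit : Z = S1 + S2 := by rw [hZ, hsplit]
  have hAnn : 0 ≤ A := Finset.sum_nonneg fun c hc =>
    hq_nonneg c (lt_of_lt_of_le (Finset.mem_range.mp hc) hkn)
  have hBnn : 0 ≤ B := Finset.sum_nonneg fun c hc =>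
    hq_nonneg c (Finset.mem_Ico.mp hc).2
  have htnn : 0 ≤ t := hw_nonneg _ hkn'
  have h1 : A * t ≤ S1 := by
    rw [hA, Finset.sum_mul]
    apply Finset.sum_le_sum
    intro c hc
    have hck : c < k := Finset.mem_range.mp hc
    have : t ≤ w c := hw_mono c (k - 1) (by omega) hkn'
    exact mul_le_mul_of_nonneg_left this (hq_nonneg c (lt_of_lt_of_le hck hkn))
  have h2 : S2 ≤ B * t := by
    rw [hB, Finset.sum_mul]
    apply Finset.sum_le_sum
    intro c hc
    obtain ⟨hck, hcn⟩ := Finset.mem_Ico.mp hc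
    have : w c ≤ t := hw_mono (k - 1) c (by omega) hcn
    exact mul_le_mul_of_nonneg_left this (hq_nonneg c hcn)
  have hps : ∑ c ∈ Finset.range k, p c = S1 / Z := by
    rw [hS1, Finset.sum_div]
    apply Finset.sum_congr rfl
    intro c hc
    exact hp c (lt_of_lt_of_le (Finset.mem_range.mp hc) hkn)
  rw [hps, le_div_iff₀ hZ_pos]
  have e1 : A * S2 ≤ A * (B * t) := mul_le_mul_of_nonneg_left h2 hAnn
  have e2 : A * t * B ≤ S1 * B := mul_le_mul_of_nonneg_right h1 hBnn
  have e3 : A * Z = A * S1 + A * S2 := by rw [hZsplit]; ring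
  have e4 : A * S1 + S1 * B = S1 := by
    have : A * S1 + S1 * B = S1 * (A + B) := by ring
    rw [this, hAB, mul_one]
  nlinarith
end

section
/- Let q : {1,…,n} → [0,1] be a nonincreasing probability vector (q_1 ≥ q_2 ≥ … ≥ q_n, Σ_c q_c = 1), and let w : {1,…,n} → [0,∞) be a nonincreasing sequence of nonnegative weights with Z := Σ_{c=1}^n q_c w_c > 0. Define p_c = q_c w_c / Z. Then H(p) ≤ H(q), where H denotes Shannon entropy: H(p) = −Σ_{c=1}^n p_c log p_c with the convention 0 log 0 = 0. -/
/-- Reweighting a nonincreasing probability vector by nonincreasing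
nonnegative weights does not increase Shannon entropy.
Indices `0, …, n-1` correspond to `1, …, n`; note `Real.log 0 = 0` gives the
convention `0 log 0 = 0`. -/
theorem entropy_le_of_reweighted
    (n : ℕ) (q w : ℕ → ℝ)
    (hq_nonneg : ∀ c, c < n → 0 ≤ q c)
    (hq_le_one : ∀ c, c < n → q c ≤ 1)
    (hq_sum : ∑ c ∈ Finset.range n, q c = 1)
    (hq_mono : ∀ c d, c ≤ d → d < n → q d ≤ q c)
    (hw_nonneg : ∀ c, c < n → 0 ≤ w c)
    (hw_mono : ∀ c d, c ≤ d → d < n → w d ≤ w c)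
    (Z : ℝ) (hZ : Z = ∑ c ∈ Finset.range n, q c * w c) (hZ_pos : 0 < Z)
    (p : ℕ → ℝ) (hp : ∀ c, c < n → p c = q c * w c / Z) :
    -∑ c ∈ Finset.range n, p c * Real.log (p c) ≤
      -∑ c ∈ Finset.range n, q c * Real.log (q c) := by
  have hpn : ∀ c, c < n → 0 ≤ p c := by
    intro c hc
    rw [hp c hc]
    exact div_nonneg (mul_nonneg (hq_nonneg c hc) (hw_nonneg c hc)) hZ_pos.le
  have hpsum : ∑ c ∈ Finset.range n, p c = 1 := by
    rw [Finset.sum_congr rfl (fun c hc => hp c (Finset.mem_range.mp hc)),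
      ← Finset.sum_div, ← hZ, div_self hZ_pos.ne']
  have hq0 : ∀ c, c < n → q c = 0 → p c = 0 := by
    intro c hc h
    rw [hp c hc, h, zero_mul, zero_div]
  -- majorization: partial sums of p dominate those of q
  have maj : ∀ k, k ≤ n → ∑ c ∈ Finset.range k, q c ≤ ∑ c ∈ Finset.range k, p c := by
    intro k hk
    have hpk : ∑ c ∈ Finset.range k, p c = (∑ c ∈ Finset.range k, q c * w c) / Z := by
      rw [Finset.sum_congr rfl
        (fun c hc => hp c (lt_of_lt_of_le (Finset.mem_range.mp hc) hk)), Finset.sum_div]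
    rw [hpk, le_div_iff₀ hZ_pos]
    rcases eq_or_lt_of_le hk with rfl | hkn
    · rw [← hZ, hq_sum, one_mul]
    · set A := ∑ c ∈ Finset.range k, q c with hA
      set B := ∑ c ∈ Finset.range k, q c * w c with hB
      set C := ∑ c ∈ Finset.Ico k n, q c * w c with hC
      set D := ∑ c ∈ Finset.Ico k n, q c with hD
      have hZBC : B + C = Z := by rw [hZ]; exact Finset.sum_range_add_sum_Ico _ hk
      have hAD : A + D = 1 := by rw [← hq_sum]; exact Finset.sum_range_add_sum_Ico _ hk
      have hA0 : 0 ≤ A := Finset.sum_nonneg fun c hc =>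
        hq_nonneg c (lt_of_lt_of_le (Finset.mem_range.mp hc) hk)
      have hD0 : 0 ≤ D := Finset.sum_nonneg fun c hc =>
        hq_nonneg c (Finset.mem_Ico.mp hc).2
      have hBle : A * w k ≤ B := by
        rw [hA, Finset.sum_mul]
        apply Finset.sum_le_sum
        intro c hc
        have hck : c < k := Finset.mem_range.mp hc
        exact mul_le_mul_of_nonneg_left (hw_mono c k hck.le hkn)
          (hq_nonneg c (hck.trans hkn))
      have hCle : C ≤ D * w k := by
        rw [hD, Finset.sum_mul]
        apply Finset.sum_le_sum
        intro c hc
        obtain ⟨hkc, hcn⟩ := Finset.mem_Ico.mp hc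
        exact mul_le_mul_of_nonneg_left (hw_mono k c hkc hcn) (hq_nonneg c hcn)
      have h1 : A * C ≤ D * B := by
        calc A * C ≤ A * (D * w k) := mul_le_mul_of_nonneg_left hCle hA0
          _ = D * (A * w k) := by ring
          _ ≤ D * B := mul_le_mul_of_nonneg_left hBle hD0
      have e : A * Z = A * B + A * C := by rw [← hZBC]; ring
      have e2 : A * B + D * B = B := by linear_combination B * hAD
      linarith
  have hsum0 : ∑ c ∈ Finset.range n, (p c - q c) = 0 := by
    rw [Finset.sum_sub_distrib, hpsum, hq_sum, sub_self]
  -- Step 2: ∑ q log q ≤ ∑ p log q via Abel summation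
  have key2 : 0 ≤ ∑ c ∈ Finset.range n, Real.log (q c) * (p c - q c) := by
    have habel := Finset.sum_range_by_parts (fun c => Real.log (q c)) (fun c => p c - q c) n
    simp only [smul_eq_mul] at habel
    rw [habel, hsum0, mul_zero, zero_sub, neg_nonneg]
    apply Finset.sum_nonpos
    intro i hi
    have hi' : i < n - 1 := Finset.mem_range.mp hi
    have hi1 : i + 1 < n := by omega
    by_cases hq1 : q (i + 1) = 0
    · have hzero : ∑ j ∈ Finset.range (i + 1), (p j - q j) = 0 := by
        rw [← hsum0]
        apply Finset.sum_subset (Finset.range_subset_range.mpr (by omega))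
        intro j hj hj2
        have hjn : j < n := Finset.mem_range.mp hj
        have hij : i + 1 ≤ j := by
          by_contra h
          exact hj2 (Finset.mem_range.mpr (by omega))
        have hqj : q j = 0 :=
          le_antisymm (hq1 ▸ hq_mono (i + 1) j hij hjn) (hq_nonneg j hjn)
        rw [hq0 j hjn hqj, hqj, sub_self]
      rw [hzero, mul_zero]
    · have hq1pos : 0 < q (i + 1) := lt_of_le_of_ne (hq_nonneg _ hi1) (Ne.symm hq1)
      have hqipos : 0 < q i := lt_of_lt_of_le hq1pos (hq_mono i (i + 1) (by omega) hi1)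
      have h1 : Real.log (q (i + 1)) - Real.log (q i) ≤ 0 :=
        sub_nonpos.mpr (Real.log_le_log hq1pos (hq_mono i (i + 1) (by omega) hi1))
      have h2 : 0 ≤ ∑ j ∈ Finset.range (i + 1), (p j - q j) := by
        have := maj (i + 1) (by omega)
        rw [Finset.sum_sub_distrib]
        linarith
      exact mul_nonpos_of_nonpos_of_nonneg h1 h2
  have expand : ∑ c ∈ Finset.range n, Real.log (q c) * (p c - q c) =
      ∑ c ∈ Finset.range n, p c * Real.log (q c) -
        ∑ c ∈ Finset.range n, q c * Real.log (q c) := by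
    rw [← Finset.sum_sub_distrib]
    exact Finset.sum_congr rfl fun c _ => by ring
  -- Step 1: Gibbs inequality
  have key1 : ∑ c ∈ Finset.range n, p c * Real.log (q c) ≤
      ∑ c ∈ Finset.range n, p c * Real.log (p c) := by
    have hterm : ∀ c ∈ Finset.range n,
        p c * Real.log (q c) - p c * Real.log (p c) ≤ q c - p c := by
      intro c hc
      have hc' : c < n := Finset.mem_range.mp hc
      rcases eq_or_lt_of_le (hq_nonneg c hc') with hq0' | hqpos
      · rw [← hq0', hq0 c hc' hq0'.symm]
        simp
      · rcases eq_or_lt_of_le (hpn c hc') with hp0 | hppos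
        · rw [← hp0]
          simpa using hqpos.le
        · have hlog := Real.log_le_sub_one_of_pos (div_pos hqpos hppos)
          rw [Real.log_div hqpos.ne' hppos.ne'] at hlog
          have h3 : p c * (q c / p c - 1) = q c - p c := by field_simp
          nlinarith
    have h := Finset.sum_le_sum hterm
    rw [Finset.sum_sub_distrib, Finset.sum_sub_distrib, hpsum, hq_sum] at h
    linarith
  linarith [key2, expand ▸ key2]
end

section
/- Let q : {1,…,n} → [0,1] be a nonincreasing probability vector (q_1 ≥ q_2 ≥ … ≥ q_n, Σ_c q_c = 1), and let τ ∈ [0,1) be a threshold with q_1 > τ. Define p_c = q_c·1[q_c > τ] / (Σ_{r : q_r > τ} q_r). Then H(p) ≤ H(q), where H denotes Shannon entropy: H(p) = −Σ_{c=1}^n p_c log p_c with the convention 0 log 0 = 0. -/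
/-- Truncating a nonincreasing probability vector at a threshold `τ`
(with `q 0 > τ`) and renormalizing does not increase Shannon entropy.
Indices `0, …, n-1` correspond to `1, …, n`; note `Real.log 0 = 0` gives the
convention `0 log 0 = 0`. -/
theorem entropy_le_of_truncated
    (n : ℕ) (q : ℕ → ℝ) (τ : ℝ)
    (hq_nonneg : ∀ c, c < n → 0 ≤ q c)
    (hq_le_one : ∀ c, c < n → q c ≤ 1)
    (hq_sum : ∑ c ∈ Finset.range n, q c = 1)
    (hq_mono : ∀ c d, c ≤ d → d < n → q d ≤ q c)
    (hτ0 : 0 ≤ τ) (hτ1 : τ < 1)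
    (hq1 : τ < q 0)
    (p : ℕ → ℝ)
    (hp : ∀ c, c < n → p c =
      q c * (if τ < q c then (1 : ℝ) else 0) /
        (∑ r ∈ (Finset.range n).filter (fun r => τ < q r), q r)) :
    -∑ c ∈ Finset.range n, p c * Real.log (p c) ≤
      -∑ c ∈ Finset.range n, q c * Real.log (q c) := by
  classical
  set F := (Finset.range n).filter (fun r => τ < q r) with hF
  set S := ∑ r ∈ F, q r with hSdef
  have hn : 0 < n := by
    rcases Nat.eq_zero_or_pos n with h | h
    · subst h; simp at hq_sum
    · exact h
  have h0F : 0 ∈ F := by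
    simp [hF, Finset.mem_filter, Finset.mem_range, hn, hq1]
  have hqFpos : ∀ c ∈ F, 0 < q c := by
    intro c hc
    rw [hF, Finset.mem_filter] at hc
    exact lt_of_le_of_lt hτ0 hc.2
  have hSq0 : q 0 ≤ S :=
    Finset.single_le_sum (fun c hc => (hqFpos c hc).le) h0F
  have hSpos : 0 < S := lt_of_lt_of_le (lt_of_le_of_lt hτ0 hq1) hSq0
  set A := ∑ c ∈ F, q c * Real.log (q c) with hAdef
  set B := ∑ c ∈ (Finset.range n).filter (fun r => ¬ τ < q r), q c * Real.log (q c) with hBdef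
  set T := ∑ c ∈ (Finset.range n).filter (fun r => ¬ τ < q r), q c with hTdef
  have hsplitS : S + T = 1 := by
    rw [hSdef, hTdef, hF, Finset.sum_filter_add_sum_filter_not]
    exact hq_sum
  have hTnonneg : 0 ≤ T :=
    Finset.sum_nonneg fun c hc =>
      hq_nonneg c (Finset.mem_range.mp (Finset.mem_filter.mp hc).1)
  have hS1 : S ≤ 1 := by linarith
  have hsplitQ : ∑ c ∈ Finset.range n, q c * Real.log (q c) = A + B := by
    rw [hAdef, hBdef, hF, Finset.sum_filter_add_sum_filter_not]
  -- LHS rewrite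
  have hLHS : ∑ c ∈ Finset.range n, p c * Real.log (p c) = A / S - Real.log S := by
    have h1 : ∑ c ∈ Finset.range n, p c * Real.log (p c)
        = ∑ c ∈ F, (q c / S) * Real.log (q c / S) := by
      rw [hF, Finset.sum_filter]
      apply Finset.sum_congr rfl
      intro c hc
      have hcn := Finset.mem_range.mp hc
      rw [hp c hcn]
      by_cases h : τ < q c <;> simp [h, hF, hSdef]
    rw [h1]
    have h2 : ∀ c ∈ F, (q c / S) * Real.log (q c / S)
        = (q c * Real.log (q c)) / S - (Real.log S / S) * q c := by
      intro c hc
      rw [Real.log_div (ne_of_gt (hqFpos c hc)) (ne_of_gt hSpos)]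
      ring
    rw [Finset.sum_congr rfl h2, Finset.sum_sub_distrib, ← Finset.sum_div,
      ← Finset.mul_sum, ← hSdef, ← hAdef]
    field_simp
  rw [hLHS, hsplitQ]
  -- key inequality : A + B ≤ A / S - Real.log S
  have hlogS : Real.log S ≤ 0 := Real.log_nonpos hSpos.le hS1
  rcases eq_or_lt_of_le hτ0 with hτz | hτpos
  · -- τ = 0 : complement terms vanish
    have hB0 : B = 0 := by
      rw [hBdef]
      apply Finset.sum_eq_zero
      intro c hc
      have h := Finset.mem_filter.mp hc
      have : q c = 0 := le_antisymm (by push_neg at h; rw [hτz]; exact h.2)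
        (hq_nonneg c (Finset.mem_range.mp h.1))
      simp [this]
    have hT0 : T = 0 := by
      rw [hTdef]
      apply Finset.sum_eq_zero
      intro c hc
      have h := Finset.mem_filter.mp hc
      exact le_antisymm (by push_neg at h; rw [hτz]; exact h.2)
        (hq_nonneg c (Finset.mem_range.mp h.1))
    have hS1' : S = 1 := by linarith
    rw [hB0, hS1']
    simp
  · -- τ > 0
    have hB : B ≤ T * Real.log τ := by
      rw [hBdef, hTdef, Finset.sum_mul]
      apply Finset.sum_le_sum
      intro c hc
      have h := Finset.mem_filter.mp hc
      have hcn := Finset.mem_range.mp h.1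
      have hqle : q c ≤ τ := by push_neg at h; exact h.2
      rcases eq_or_lt_of_le (hq_nonneg c hcn) with hz | hz
      · simp [← hz]
      · exact mul_le_mul_of_nonneg_left (Real.log_le_log hz hqle) (hq_nonneg c hcn)
    have hA : S * Real.log τ ≤ A := by
      rw [hAdef, hSdef, Finset.sum_mul]
      apply Finset.sum_le_sum
      intro c hc
      have hq := (Finset.mem_filter.mp hc).2
      exact mul_le_mul_of_nonneg_left
        (Real.log_le_log hτpos hq.le) (hqFpos c hc).le
    have hlogτ_le : Real.log τ ≤ A / S := by
      rw [le_div_iff₀ hSpos]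
      linarith [hA]
    have h1 : T * Real.log τ ≤ T * (A / S) :=
      mul_le_mul_of_nonneg_left hlogτ_le hTnonneg
    have h2 : A + T * (A / S) = A / S := by
      field_simp
      linear_combination A * hsplitS
    linarith
end

section
/- Let q : {1,…,n} → [0,1] be a nonincreasing probability vector (q_1 ≥ q_2 ≥ … ≥ q_n, Σ_c q_c = 1), let τ ∈ (0,1], let J be a finite index set, and for each j ∈ J let q^j : {1,…,m_j} → [0,1] be a probability vector. Define the weights w_c = Π_{j∈J} ( Σ_{r : q^j_r ≤ min(τ, q_c)} q^j_r ) for c ∈ {1,…,n}, and assume Z := Σ_{c=1}^n q_c w_c > 0. Define p_c = q_c w_c / Z. Then for every k ∈ {1,…,n}, Σ_{c=1}^k p_c ≥ Σ_{c=1}^k q_c. -/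
/-- Reweighting a nonincreasing probability vector `q` by the
confidence-based weights `w c = ∏_{j ∈ J} (mass of entries of q^j not exceeding
min(τ, q c))` yields a probability vector majorizing `q`.
Indices `0, …, n-1` correspond to `1, …, n`. -/
theorem confidence_reweighted_majorizes
    (n : ℕ) (q : ℕ → ℝ) (τ : ℝ)
    (hq_nonneg : ∀ c, c < n → 0 ≤ q c)
    (hq_le_one : ∀ c, c < n → q c ≤ 1)
    (hq_sum : ∑ c ∈ Finset.range n, q c = 1)
    (hq_mono : ∀ c d, c ≤ d → d < n → q d ≤ q c)
    (hτ0 : 0 < τ) (hτ1 : τ ≤ 1)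
    (J : Type*) [Fintype J] (m : J → ℕ) (qj : J → ℕ → ℝ)
    (hqj_nonneg : ∀ j, ∀ r, r < m j → 0 ≤ qj j r)
    (hqj_le_one : ∀ j, ∀ r, r < m j → qj j r ≤ 1)
    (hqj_sum : ∀ j, ∑ r ∈ Finset.range (m j), qj j r = 1)
    (w : ℕ → ℝ)
    (hw : ∀ c, c < n → w c =
      ∏ j : J, ∑ r ∈ (Finset.range (m j)).filter (fun r => qj j r ≤ min τ (q c)),
        qj j r)
    (Z : ℝ) (hZ : Z = ∑ c ∈ Finset.range n, q c * w c) (hZ_pos : 0 < Z)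
    (p : ℕ → ℝ) (hp : ∀ c, c < n → p c = q c * w c / Z) :
    ∀ k, 1 ≤ k → k ≤ n →
      ∑ c ∈ Finset.range k, q c ≤ ∑ c ∈ Finset.range k, p c := by
  have hw_nonneg : ∀ c, c < n → 0 ≤ w c := by
    intro c hc
    rw [hw c hc]
    apply Finset.prod_nonneg
    intro j _
    apply Finset.sum_nonneg
    intro r hr
    exact hqj_nonneg j r (Finset.mem_range.mp (Finset.mem_filter.mp hr).1)
  have hw_mono : ∀ c d, c ≤ d → d < n → w d ≤ w c := by
    intro c d hcd hd
    have hc : c < n := lt_of_le_of_lt hcd hd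
    rw [hw c hc, hw d hd]
    apply Finset.prod_le_prod
    · intro j _
      apply Finset.sum_nonneg
      intro r hr
      exact hqj_nonneg j r (Finset.mem_range.mp (Finset.mem_filter.mp hr).1)
    · intro j _
      apply Finset.sum_le_sum_of_subset_of_nonneg
      · intro r hr
        obtain ⟨hr1, hr2⟩ := Finset.mem_filter.mp hr
        exact Finset.mem_filter.mpr
          ⟨hr1, le_trans hr2 (min_le_min le_rfl (hq_mono c d hcd hd))⟩
      · intro r hr _
        exact hqj_nonneg j r (Finset.mem_range.mp (Finset.mem_filter.mp hr).1)
  intro k hk1 hkn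
  have hk1n : k - 1 < n := by omega
  set Q := ∑ c ∈ Finset.range k, q c with hQ
  set R := ∑ c ∈ Finset.Ico k n, q c with hR
  set S := ∑ c ∈ Finset.range k, q c * w c with hS
  set T := ∑ c ∈ Finset.Ico k n, q c * w c with hT
  have hsplit : Z = S + T := by
    rw [hZ, ← Finset.sum_range_add_sum_Ico (fun c => q c * w c) hkn]
  have hQR : Q + R = 1 := by
    rw [hQ, hR, Finset.sum_range_add_sum_Ico q hkn, hq_sum]
  have hQ0 : 0 ≤ Q := Finset.sum_nonneg fun c hc =>
    hq_nonneg c (lt_of_lt_of_le (Finset.mem_range.mp hc) hkn)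
  have hR0 : 0 ≤ R := Finset.sum_nonneg fun c hc =>
    hq_nonneg c (Finset.mem_Ico.mp hc).2
  have hSlb : w (k - 1) * Q ≤ S := by
    rw [hQ, hS, Finset.mul_sum]
    apply Finset.sum_le_sum
    intro c hc
    have hck : c < k := Finset.mem_range.mp hc
    have hcn : c < n := lt_of_lt_of_le hck hkn
    rw [mul_comm]
    exact mul_le_mul_of_nonneg_left (hw_mono c (k - 1) (by omega) hk1n)
      (hq_nonneg c hcn)
  have hTub : T ≤ w (k - 1) * R := by
    rw [hR, hT, Finset.mul_sum]
    apply Finset.sum_le_sum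
    intro c hc
    obtain ⟨hkc, hcn⟩ := Finset.mem_Ico.mp hc
    rw [mul_comm (q c)]
    exact mul_le_mul_of_nonneg_right (hw_mono (k - 1) c (by omega) hcn)
      (hq_nonneg c hcn)
  have hp_sum : ∑ c ∈ Finset.range k, p c = S / Z := by
    rw [hS, Finset.sum_div]
    apply Finset.sum_congr rfl
    intro c hc
    exact hp c (lt_of_lt_of_le (Finset.mem_range.mp hc) hkn)
  rw [hp_sum, le_div_iff₀ hZ_pos]
  calc Q * Z = Q * S + Q * T := by rw [hsplit]; ring
    _ ≤ Q * S + Q * (w (k - 1) * R) := by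
        nlinarith [mul_le_mul_of_nonneg_left hTub hQ0]
    _ ≤ Q * S + S * R := by
        nlinarith [mul_le_mul_of_nonneg_right hSlb hR0]
    _ = S * (Q + R) := by ring
    _ = S := by rw [hQR, mul_one]
end

section
/- Let q : {1,…,n} → [0,1] be a nonincreasing probability vector (q_1 ≥ q_2 ≥ … ≥ q_n, Σ_c q_c = 1), let τ ∈ (0,1], let J be a finite index set, and for each j ∈ J let q^j : {1,…,m_j} → [0,1] be a probability vector. Define w_c = Π_{j∈J} ( Σ_{r : q^j_r ≤ min(τ, q_c)} q^j_r ) and assume Z := Σ_{c=1}^n q_c w_c > 0. Define p_c = q_c w_c / Z. Then H(p) ≤ H(q), where H denotes Shannon entropy: H(p) = −Σ_{c=1}^n p_c log p_c with the convention 0 log 0 = 0. -/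
/-- Reweighting a nonincreasing probability vector `q` by the
confidence-based weights `w c = ∏_{j ∈ J} (mass of entries of q^j not exceeding
min(τ, q c))` does not increase Shannon entropy.
Indices `0, …, n-1` correspond to `1, …, n`; note `Real.log 0 = 0` gives the
convention `0 log 0 = 0`. -/
theorem entropy_le_of_confidence_reweighted
    (n : ℕ) (q : ℕ → ℝ) (τ : ℝ)
    (hq_nonneg : ∀ c, c < n → 0 ≤ q c)
    (hq_le_one : ∀ c, c < n → q c ≤ 1)
    (hq_sum : ∑ c ∈ Finset.range n, q c = 1)
    (hq_mono : ∀ c d, c ≤ d → d < n → q d ≤ q c)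
    (hτ0 : 0 < τ) (hτ1 : τ ≤ 1)
    (J : Type*) [Fintype J] (m : J → ℕ) (qj : J → ℕ → ℝ)
    (hqj_nonneg : ∀ j, ∀ r, r < m j → 0 ≤ qj j r)
    (hqj_le_one : ∀ j, ∀ r, r < m j → qj j r ≤ 1)
    (hqj_sum : ∀ j, ∑ r ∈ Finset.range (m j), qj j r = 1)
    (w : ℕ → ℝ)
    (hw : ∀ c, c < n → w c =
      ∏ j : J, ∑ r ∈ (Finset.range (m j)).filter (fun r => qj j r ≤ min τ (q c)),
        qj j r)
    (Z : ℝ) (hZ : Z = ∑ c ∈ Finset.range n, q c * w c) (hZ_pos : 0 < Z)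
    (p : ℕ → ℝ) (hp : ∀ c, c < n → p c = q c * w c / Z) :
    -∑ c ∈ Finset.range n, p c * Real.log (p c) ≤
      -∑ c ∈ Finset.range n, q c * Real.log (q c) := by
  have hn : 0 < n := by
    rcases Nat.eq_zero_or_pos n with h | h
    · subst h; simp at hq_sum
    · exact h
  have hw_nonneg : ∀ c, c < n → 0 ≤ w c := by
    intro c hc; rw [hw c hc]
    apply Finset.prod_nonneg; intro j _
    apply Finset.sum_nonneg; intro r hr
    exact hqj_nonneg j r (Finset.mem_range.mp (Finset.mem_filter.mp hr).1)
  have hw_mono : ∀ c d, c ≤ d → d < n → w d ≤ w c := by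
    intro c d hcd hd
    rw [hw c (lt_of_le_of_lt hcd hd), hw d hd]
    apply Finset.prod_le_prod
    · intro j _; apply Finset.sum_nonneg; intro r hr
      exact hqj_nonneg j r (Finset.mem_range.mp (Finset.mem_filter.mp hr).1)
    · intro j _
      apply Finset.sum_le_sum_of_subset_of_nonneg
      · intro r hr
        simp only [Finset.mem_filter, Finset.mem_range] at *
        refine ⟨hr.1, hr.2.trans (le_min (min_le_left _ _) ?_)⟩
        exact (min_le_right _ _).trans (hq_mono c d hcd hd)
      · intro r hr _
        exact hqj_nonneg j r (Finset.mem_range.mp (Finset.mem_filter.mp hr).1)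
  have hp_nonneg : ∀ c, c < n → 0 ≤ p c := by
    intro c hc; rw [hp c hc]
    exact div_nonneg (mul_nonneg (hq_nonneg c hc) (hw_nonneg c hc)) hZ_pos.le
  have hp_sum : ∑ c ∈ Finset.range n, p c = 1 := by
    rw [Finset.sum_congr rfl (fun c hc => hp c (Finset.mem_range.mp hc)),
      ← Finset.sum_div, ← hZ, div_self hZ_pos.ne']
  have hq0 : 0 < q 0 := by
    by_contra h; push_neg at h
    have hall : ∀ c ∈ Finset.range n, q c = 0 := by
      intro c hc
      have hc' := Finset.mem_range.mp hc
      exact le_antisymm ((hq_mono 0 c (Nat.zero_le c) hc').trans h) (hq_nonneg c hc')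
    rw [Finset.sum_eq_zero hall] at hq_sum; norm_num at hq_sum
  have hZw0 : Z ≤ w 0 := by
    rw [hZ]
    calc ∑ c ∈ Finset.range n, q c * w c ≤ ∑ c ∈ Finset.range n, q c * w 0 := by
          apply Finset.sum_le_sum; intro c hc
          have hc' := Finset.mem_range.mp hc
          exact mul_le_mul_of_nonneg_left (hw_mono 0 c (Nat.zero_le c) hc') (hq_nonneg c hc')
      _ = w 0 := by rw [← Finset.sum_mul, hq_sum, one_mul]
  set S := (Finset.range n).filter (fun c => Z ≤ w c ∧ 0 < q c) with hS
  have hS_ne : S.Nonempty := ⟨0, by simp [hS, Finset.mem_filter, hn, hZw0, hq0]⟩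
  set k := S.max' hS_ne with hk
  have hkS : k ∈ S := S.max'_mem hS_ne
  rw [hS, Finset.mem_filter, Finset.mem_range] at hkS
  obtain ⟨hk_lt, hZwk, hqk⟩ := hkS
  set L := Real.log (q k) with hL
  -- key pointwise inequality
  have key : ∀ c ∈ Finset.range n, 0 ≤ (p c - q c) * (Real.log (q c) - L) := by
    intro c hc
    have hc' := Finset.mem_range.mp hc
    rcases le_or_gt c k with hck | hck
    · -- c ≤ k : p c ≥ q c and log q c ≥ L
      have hqc : q k ≤ q c := hq_mono c k hck hk_lt
      have hwc : Z ≤ w c := hZwk.trans (hw_mono c k hck hk_lt)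
      have hpq : q c ≤ p c := by
        rw [hp c hc']
        rw [le_div_iff₀ hZ_pos]
        exact mul_le_mul_of_nonneg_left hwc (hq_nonneg c hc')
      have hlog : L ≤ Real.log (q c) := Real.log_le_log hqk hqc
      exact mul_nonneg (by linarith) (by linarith)
    · -- c > k
      rcases eq_or_lt_of_le (hq_nonneg c hc') with hq0' | hq0'
      · rw [hp c hc', ← hq0', zero_mul, zero_div]
        simp [← hq0']
      · have hwc : w c < Z := by
          by_contra hcon; push_neg at hcon
          have : c ∈ S := by
            rw [hS, Finset.mem_filter, Finset.mem_range]; exact ⟨hc', hcon, hq0'⟩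
          exact absurd (S.le_max' c this) (not_le.mpr hck)
        have hpq : p c ≤ q c := by
          rw [hp c hc', div_le_iff₀ hZ_pos]
          exact mul_le_mul_of_nonneg_left hwc.le (hq_nonneg c hc')
        have hlog : Real.log (q c) ≤ L := Real.log_le_log hq0' (hq_mono k c hck.le hc')
        nlinarith
  -- Step A : ∑ q log q ≤ ∑ p log q
  have stepA : ∑ c ∈ Finset.range n, q c * Real.log (q c)
      ≤ ∑ c ∈ Finset.range n, p c * Real.log (q c) := by
    have h1 : 0 ≤ ∑ c ∈ Finset.range n, (p c - q c) * (Real.log (q c) - L) :=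
      Finset.sum_nonneg key
    have h2 : ∑ c ∈ Finset.range n, (p c - q c) * (Real.log (q c) - L)
        = ∑ c ∈ Finset.range n, p c * Real.log (q c)
          - ∑ c ∈ Finset.range n, q c * Real.log (q c)
          - L * (∑ c ∈ Finset.range n, p c - ∑ c ∈ Finset.range n, q c) := by
      rw [← Finset.sum_sub_distrib, ← Finset.sum_sub_distrib, Finset.mul_sum,
        ← Finset.sum_sub_distrib]
      apply Finset.sum_congr rfl
      intro c _; ring
    rw [h2, hp_sum, hq_sum] at h1
    linarith
  -- Step B (Gibbs) : ∑ p log q ≤ ∑ p log p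
  have stepB : ∑ c ∈ Finset.range n, p c * Real.log (q c)
      ≤ ∑ c ∈ Finset.range n, p c * Real.log (p c) := by
    have h1 : ∑ c ∈ Finset.range n, (p c * Real.log (q c) - p c * Real.log (p c))
        ≤ ∑ c ∈ Finset.range n, (q c - p c) := by
      apply Finset.sum_le_sum
      intro c hc
      have hc' := Finset.mem_range.mp hc
      rcases eq_or_lt_of_le (hp_nonneg c hc') with hp0 | hp0
      · rw [← hp0]; simp [hq_nonneg c hc']
      · have hq0' : 0 < q c := by
          by_contra hcon; push_neg at hcon
          have : q c = 0 := le_antisymm hcon (hq_nonneg c hc')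
          rw [hp c hc', this, zero_mul, zero_div] at hp0
          exact lt_irrefl _ hp0
        have hdiv : 0 < q c / p c := div_pos hq0' hp0
        have := Real.log_le_sub_one_of_pos hdiv
        rw [Real.log_div hq0'.ne' hp0.ne'] at this
        have h3 : p c * (Real.log (q c) - Real.log (p c)) ≤ p c * (q c / p c - 1) :=
          mul_le_mul_of_nonneg_left this hp0.le
        have h4 : p c * (q c / p c - 1) = q c - p c := by field_simp
        rw [mul_sub] at h3
        linarith
    rw [Finset.sum_sub_distrib, Finset.sum_sub_distrib, hq_sum, hp_sum] at h1
    linarith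
  linarith
end

section
/- Let q : {1,…,n} → [0,1] be a nonincreasing probability vector (q_1 ≥ q_2 ≥ … ≥ q_n, Σ_c q_c = 1), let M be a finite index set, let λ : M → [0,1] be a probability vector on M (Σ_{m∈M} λ_m = 1), and for each m ∈ M let p^m : {1,…,n} → [0,1] be a nonincreasing probability vector such that for every k ∈ {1,…,n}, Σ_{c=1}^k p^m_c ≥ Σ_{c=1}^k q_c. Then the λ-average of the entropies satisfies Σ_{m∈M} λ_m · H(p^m) ≤ H(q), where H denotes Shannon entropy: H(p) = −Σ_{c=1}^n p_c log p_c with the convention 0 log 0 = 0. -/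
/-- Gradient inequality for the concave function `x ↦ -x log x` at a point `y > 0`. -/
lemma neg_mul_log_concave_ineq {x y : ℝ} (hx : 0 ≤ x) (hy : 0 < y) :
    -(x * Real.log x) ≤ -(y * Real.log y) + (-Real.log y - 1) * (x - y) := by
  rcases eq_or_lt_of_le hx with h | h
  · subst h
    simp only [Real.log_zero, mul_zero, zero_mul, neg_zero, zero_sub, mul_neg]
    nlinarith [Real.log_le_sub_one_of_pos hy]
  · have hlog : Real.log (y / x) ≤ y / x - 1 :=
      Real.log_le_sub_one_of_pos (div_pos hy h)
    rw [Real.log_div (ne_of_gt hy) (ne_of_gt h)] at hlog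
    have hmul : x * (Real.log y - Real.log x) ≤ x * (y / x - 1) :=
      mul_le_mul_of_nonneg_left hlog (le_of_lt h)
    have hx' : x * (y / x - 1) = y - x := by field_simp
    nlinarith

/-- Entropy is Schur-concave: if `p` majorizes the nonincreasing probability
vector `q` (in the prefix-sum sense), then `H(p) ≤ H(q)`. -/
lemma entropy_le_of_majorizes
    (n : ℕ) (q p : ℕ → ℝ)
    (hq_nonneg : ∀ c, c < n → 0 ≤ q c)
    (hq_sum : ∑ c ∈ Finset.range n, q c = 1)
    (hq_mono : ∀ c d, c ≤ d → d < n → q d ≤ q c)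
    (hp_nonneg : ∀ c, c < n → 0 ≤ p c)
    (hp_sum : ∑ c ∈ Finset.range n, p c = 1)
    (hmaj : ∀ k, 1 ≤ k → k ≤ n →
      ∑ c ∈ Finset.range k, q c ≤ ∑ c ∈ Finset.range k, p c) :
    -∑ c ∈ Finset.range n, p c * Real.log (p c) ≤
      -∑ c ∈ Finset.range n, q c * Real.log (q c) := by
  -- Key structural fact: if q k = 0 with k < n then both prefix sums up to k are 1
  -- and p vanishes from k on.
  have hkey : ∀ k, k < n → q k = 0 →
      (∑ c ∈ Finset.range k, q c = 1) ∧ (∑ c ∈ Finset.range k, p c = 1) ∧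
      (∀ j, k ≤ j → j < n → p j = 0) := by
    intro k hk hqk
    have hqpre : ∑ c ∈ Finset.range k, q c = 1 := by
      have hsplit := Finset.sum_range_add_sum_Ico q (le_of_lt hk)
      have hzero : ∑ c ∈ Finset.Ico k n, q c = 0 := by
        apply Finset.sum_eq_zero
        intro j hj
        rw [Finset.mem_Ico] at hj
        have h1 := hq_mono k j hj.1 hj.2
        have h2 := hq_nonneg j hj.2
        linarith [hqk ▸ h1]
      rw [hzero] at hsplit
      linarith [hq_sum ▸ hsplit]
    have hk1 : 1 ≤ k := by
      by_contra h
      push_neg at h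
      interval_cases k
      simp at hqpre
    have hple : ∑ c ∈ Finset.range k, p c ≤ 1 := by
      have hsplit := Finset.sum_range_add_sum_Ico p (le_of_lt hk)
      have hnn : 0 ≤ ∑ c ∈ Finset.Ico k n, p c := by
        apply Finset.sum_nonneg
        intro j hj
        rw [Finset.mem_Ico] at hj
        exact hp_nonneg j hj.2
      linarith [hp_sum ▸ hsplit]
    have hpge : 1 ≤ ∑ c ∈ Finset.range k, p c := hqpre ▸ hmaj k hk1 (le_of_lt hk)
    have hppre : ∑ c ∈ Finset.range k, p c = 1 := le_antisymm hple hpge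
    refine ⟨hqpre, hppre, ?_⟩
    have hsplit := Finset.sum_range_add_sum_Ico p (le_of_lt hk)
    have hIco0 : ∑ c ∈ Finset.Ico k n, p c = 0 := by
      rw [hppre] at hsplit
      linarith [hp_sum ▸ hsplit]
    intro j hj1 hj2
    have := (Finset.sum_eq_zero_iff_of_nonneg (fun i hi => by
      rw [Finset.mem_Ico] at hi; exact hp_nonneg i hi.2)).mp hIco0
    exact this j (Finset.mem_Ico.mpr ⟨hj1, hj2⟩)
  -- Step 1: pointwise gradient inequality
  have step2 : ∀ c ∈ Finset.range n,
      -(p c * Real.log (p c)) ≤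
        -(q c * Real.log (q c)) + (-Real.log (q c) - 1) * (p c - q c) := by
    intro c hc
    rw [Finset.mem_range] at hc
    rcases (hq_nonneg c hc).eq_or_lt with h | h
    · have hpc : p c = 0 := (hkey c hc h.symm).2.2 c le_rfl hc
      rw [hpc, ← h]
      simp
    · exact neg_mul_log_concave_ineq (hp_nonneg c hc) h
  have hsum2 := Finset.sum_le_sum step2
  rw [Finset.sum_add_distrib] at hsum2
  -- Step 2: the sum of differences is 0
  have hd0 : ∑ c ∈ Finset.range n, (p c - q c) = 0 := by
    rw [Finset.sum_sub_distrib, hp_sum, hq_sum]; ring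
  -- Step 3: Abel summation bound
  have habel : ∑ c ∈ Finset.range n, (-Real.log (q c)) * (p c - q c) ≤ 0 := by
    have hparts := Finset.sum_range_by_parts
      (fun c => -Real.log (q c)) (fun c => p c - q c) n
    simp only [smul_eq_mul] at hparts
    rw [hparts, hd0, mul_zero, zero_sub, neg_nonpos]
    apply Finset.sum_nonneg
    intro i hi
    rw [Finset.mem_range] at hi
    have hkn : i + 1 < n := by omega
    rcases (hq_nonneg (i + 1) hkn).eq_or_lt with h | h
    · have hq1 := (hkey (i + 1) hkn h.symm).1
      have hp1 := (hkey (i + 1) hkn h.symm).2.1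
      have : ∑ j ∈ Finset.range (i + 1), (p j - q j) = 0 := by
        rw [Finset.sum_sub_distrib, hq1, hp1]; ring
      rw [this, mul_zero]
    · have hqi : 0 < q i := lt_of_lt_of_le h (hq_mono i (i + 1) (by omega) hkn)
      apply mul_nonneg
      · have := Real.log_le_log h (hq_mono i (i + 1) (by omega) hkn)
        linarith
      · have := hmaj (i + 1) (by omega) (by omega)
        rw [Finset.sum_sub_distrib]
        linarith
  -- Combine
  have hexp : ∑ c ∈ Finset.range n, (-Real.log (q c) - 1) * (p c - q c) ≤ 0 := by
    have : ∑ c ∈ Finset.range n, (-Real.log (q c) - 1) * (p c - q c) =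
        (∑ c ∈ Finset.range n, (-Real.log (q c)) * (p c - q c)) -
        ∑ c ∈ Finset.range n, (p c - q c) := by
      rw [← Finset.sum_sub_distrib]
      apply Finset.sum_congr rfl
      intro c _; ring
    rw [this, hd0, sub_zero]
    exact habel
  calc -∑ c ∈ Finset.range n, p c * Real.log (p c)
      = ∑ c ∈ Finset.range n, -(p c * Real.log (p c)) := by
        rw [Finset.sum_neg_distrib]
    _ ≤ (∑ c ∈ Finset.range n, -(q c * Real.log (q c))) +
        ∑ c ∈ Finset.range n, (-Real.log (q c) - 1) * (p c - q c) := hsum2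
    _ ≤ ∑ c ∈ Finset.range n, -(q c * Real.log (q c)) := by linarith
    _ = -∑ c ∈ Finset.range n, q c * Real.log (q c) := by
        rw [Finset.sum_neg_distrib]

/-- If each nonincreasing probability vector `p^m` majorizes the
nonincreasing probability vector `q`, then any convex combination (with weights
`λ`) of the entropies `H(p^m)` is at most `H(q)`.
Indices `0, …, n-1` correspond to `1, …, n`; note `Real.log 0 = 0` gives the
convention `0 log 0 = 0`. -/
theorem avg_entropy_le_of_majorizes
    (n : ℕ) (q : ℕ → ℝ)
    (hq_nonneg : ∀ c, c < n → 0 ≤ q c)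
    (hq_le_one : ∀ c, c < n → q c ≤ 1)
    (hq_sum : ∑ c ∈ Finset.range n, q c = 1)
    (hq_mono : ∀ c d, c ≤ d → d < n → q d ≤ q c)
    (M : Type*) [Fintype M] (lam : M → ℝ)
    (hlam_nonneg : ∀ m, 0 ≤ lam m)
    (hlam_le_one : ∀ m, lam m ≤ 1)
    (hlam_sum : ∑ m : M, lam m = 1)
    (p : M → ℕ → ℝ)
    (hp_nonneg : ∀ m, ∀ c, c < n → 0 ≤ p m c)
    (hp_le_one : ∀ m, ∀ c, c < n → p m c ≤ 1)
    (hp_sum : ∀ m, ∑ c ∈ Finset.range n, p m c = 1)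
    (hp_mono : ∀ m, ∀ c d, c ≤ d → d < n → p m d ≤ p m c)
    (hmaj : ∀ m, ∀ k, 1 ≤ k → k ≤ n →
      ∑ c ∈ Finset.range k, q c ≤ ∑ c ∈ Finset.range k, p m c) :
    ∑ m : M, lam m * (-∑ c ∈ Finset.range n, p m c * Real.log (p m c)) ≤
      -∑ c ∈ Finset.range n, q c * Real.log (q c) := by
  have hent : ∀ m : M,
      -∑ c ∈ Finset.range n, p m c * Real.log (p m c) ≤
        -∑ c ∈ Finset.range n, q c * Real.log (q c) :=
    fun m => entropy_le_of_majorizes n q (p m) hq_nonneg hq_sum hq_mono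
      (hp_nonneg m) (hp_sum m) (hmaj m)
  calc ∑ m : M, lam m * (-∑ c ∈ Finset.range n, p m c * Real.log (p m c))
      ≤ ∑ m : M, lam m * (-∑ c ∈ Finset.range n, q c * Real.log (q c)) := by
        apply Finset.sum_le_sum
        intro m _
        exact mul_le_mul_of_nonneg_left (hent m) (hlam_nonneg m)
    _ = -∑ c ∈ Finset.range n, q c * Real.log (q c) := by
        rw [← Finset.sum_mul, hlam_sum, one_mul]
end
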